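/- Let q be a prime power and m ≥ 2. The q-ary simplex code of dimension m, i.e., the code C_D with D = PG(m−1,q), has (2, q)-locality: every coordinate lies in a set of q+1 coordinates (a projective line) on which the punctured code has minimum distance q. -/

import Mathlib

open Matrix Finset

/-- Points of `PG(m-1,q)`: nonzero vectors whose first nonzero coordinate is `1`. -/
def projPoints (F : Type*) [Field F] [Fintype F] [DecidableEq F] (m : ℕ) :
    Finset (Fin m → F) :=
  Finset.univ.filter fun v => ∃ i, v i = 1 ∧ ∀ j, j < i → v j = 0

section aux
variable {F : Type*} [Field F] [Fintype F] [DecidableEq F] {m : ℕ}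

lemma mem_projPoints {v : Fin m → F} :
    v ∈ projPoints F m ↔ ∃ i, v i = 1 ∧ ∀ j, j < i → v j = 0 := by
  simp [projPoints]

lemma projPoints_ne_zero {v : Fin m → F} (h : v ∈ projPoints F m) : v ≠ 0 := by
  obtain ⟨i, hi, -⟩ := mem_projPoints.mp h
  intro h0; rw [h0] at hi; simpa using hi

lemma projPoints_eq_of_smul {p p' : Fin m → F} (hp : p ∈ projPoints F m)
    (hp' : p' ∈ projPoints F m) (c : F) (h : p = c • p') : p = p' := by
  obtain ⟨i, hi1, hi0⟩ := mem_projPoints.mp hp'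
  obtain ⟨j, hj1, hj0⟩ := mem_projPoints.mp hp
  have hc : c ≠ 0 := by
    intro h0
    rw [h0, zero_smul] at h
    exact projPoints_ne_zero hp h
  have hij : i = j := by
    rcases lt_trichotomy i j with hlt | heq | hlt
    · have : p i = 0 := hj0 i hlt
      rw [h] at this
      simp only [Pi.smul_apply, smul_eq_mul, hi1, mul_one] at this
      exact absurd this hc
    · exact heq
    · have : p' j = 0 := hi0 j hlt
      have h2 : p j = c * p' j := by rw [h]; simp
      rw [this, mul_zero] at h2
      rw [hj1] at h2
      exact absurd h2 one_ne_zero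
  have hc1 : c = 1 := by
    have : p j = c * p' j := by rw [h]; simp
    rw [hj1, ← hij, hi1, mul_one] at this
    exact this.symm
  rw [h, hc1, one_smul]

lemma exists_smul_mem_projPoints {v : Fin m → F} (hv : v ≠ 0) :
    ∃ c : F, c ≠ 0 ∧ c • v ∈ projPoints F m := by
  have hne : (univ.filter fun i => v i ≠ 0).Nonempty := by
    rw [Finset.filter_nonempty_iff]
    by_contra hcon
    push_neg at hcon
    exact hv (funext fun i => by simpa using hcon i (mem_univ i))
  set i := (univ.filter fun i => v i ≠ 0).min' hne with hi
  have hvi : v i ≠ 0 := by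
    have := Finset.min'_mem _ hne
    simpa using this
  refine ⟨(v i)⁻¹, inv_ne_zero hvi, mem_projPoints.mpr ⟨i, ?_, ?_⟩⟩
  · simp [inv_mul_cancel₀ hvi]
  · intro j hj
    have hvj : v j = 0 := by
      by_contra hvj
      have : i ≤ j := Finset.min'_le _ _ (by simpa using hvj)
      exact absurd hj (not_lt.mpr this)
    simp [hvj]

open scoped Classical

/-- Normalization of a nonzero vector to its projective representative. -/
noncomputable def nrm (v : Fin m → F) : Fin m → F :=
  if h : ∃ c : F, c ≠ 0 ∧ c • v ∈ projPoints F m then h.choose • v else 0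

lemma nrm_spec {v : Fin m → F} (hv : v ≠ 0) :
    nrm v ∈ projPoints F m ∧ ∃ c : F, c ≠ 0 ∧ nrm v = c • v := by
  have h := exists_smul_mem_projPoints hv
  rw [nrm, dif_pos h]
  exact ⟨h.choose_spec.2, h.choose, h.choose_spec.1, rfl⟩

lemma nrm_eq_self {p : Fin m → F} (hp : p ∈ projPoints F m) : nrm p = p := by
  obtain ⟨hmem, c, hc, hcp⟩ := nrm_spec (projPoints_ne_zero hp)
  exact projPoints_eq_of_smul hmem hp c hcp

lemma nrm_smul {v : Fin m → F} (hv : v ≠ 0) {c : F} (hc : c ≠ 0) :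
    nrm (c • v) = nrm v := by
  obtain ⟨h1, c1, hc1, he1⟩ := nrm_spec (v := c • v) (by
    intro h0
    exact hv (by simpa [smul_eq_zero, hc] using h0))
  obtain ⟨h2, c2, hc2, he2⟩ := nrm_spec hv
  refine projPoints_eq_of_smul h1 h2 ((c1 * c) * c2⁻¹) ?_
  rw [he1, he2, smul_smul, smul_smul, mul_assoc, inv_mul_cancel₀ hc2, mul_one]

lemma smul_mem_iff_nrm_eq {p v : Fin m → F} (hp : p ∈ projPoints F m) (hv : v ≠ 0) :
    nrm v = p ↔ ∃ c : F, c ≠ 0 ∧ v = c • p := by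
  constructor
  · intro h
    obtain ⟨-, c, hc, he⟩ := nrm_spec hv
    refine ⟨c⁻¹, inv_ne_zero hc, ?_⟩
    rw [← h, he, smul_smul, inv_mul_cancel₀ hc, one_smul]
  · rintro ⟨c, hc, rfl⟩
    rw [nrm_smul (projPoints_ne_zero hp) hc, nrm_eq_self hp]

/-- Orbit counting: projective points in a subspace `U`. -/
lemma projPoints_count (U : Submodule F (Fin m → F)) :
    ((projPoints F m).filter fun v => v ∈ U).card * (Fintype.card F - 1)
      = Fintype.card U - 1 := by
  classical
  set S : Finset (Fin m → F) := univ.filter fun v => v ∈ U ∧ v ≠ 0 with hS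
  set T : Finset (Fin m → F) := (projPoints F m).filter fun v => v ∈ U with hT
  have hmaps : ∀ v ∈ S, nrm v ∈ T := by
    intro v hv
    simp only [hS, mem_filter, mem_univ, true_and] at hv
    obtain ⟨hmem, c, hc, he⟩ := nrm_spec hv.2
    simp only [hT, mem_filter]
    exact ⟨hmem, he ▸ U.smul_mem c hv.1⟩
  have hcard := Finset.card_eq_sum_card_fiberwise hmaps
  have hfib : ∀ p ∈ T, (S.filter fun v => nrm v = p).card = Fintype.card F - 1 := by
    intro p hp
    simp only [hT, mem_filter] at hp
    have hp0 := projPoints_ne_zero hp.1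
    have : (S.filter fun v => nrm v = p) = (univ.filter fun c : F => c ≠ 0).image (· • p) := by
      ext v
      simp only [mem_filter, mem_image, mem_univ, true_and, hS]
      constructor
      · rintro ⟨⟨-, hv0⟩, hnrm⟩
        obtain ⟨c, hc, rfl⟩ := (smul_mem_iff_nrm_eq hp.1 hv0).mp hnrm
        exact ⟨c, hc, rfl⟩
      · rintro ⟨c, hc, rfl⟩
        refine ⟨⟨U.smul_mem c hp.2, by simp [smul_eq_zero, hc, hp0]⟩, ?_⟩
        exact (smul_mem_iff_nrm_eq hp.1 (by simp [smul_eq_zero, hc, hp0])).mpr ⟨c, hc, rfl⟩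
    rw [this, Finset.card_image_of_injective _ (fun a b hab => by
      obtain ⟨i, hi1, -⟩ := mem_projPoints.mp hp.1
      have := congrFun hab i
      simpa [hi1] using this)]
    rw [Finset.filter_ne', Finset.card_erase_of_mem (mem_univ 0), Finset.card_univ]
  rw [Finset.sum_congr rfl hfib, Finset.sum_const, smul_eq_mul] at hcard
  have hScard : S.card = Fintype.card U - 1 := by
    have h1 : S = (univ.filter fun v => v ∈ U).erase 0 := by
      ext v
      simp [hS, mem_erase, and_comm]
    rw [h1, Finset.card_erase_of_mem (by simp [U.zero_mem]),
      ← Fintype.card_subtype]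
  rw [← hcard, hScard]
end aux

open scoped Classical in
/-- The `q`-ary simplex code of dimension `m` has `(2,q)`-locality: every coordinate lies on a
projective line, a set of `q+1` coordinates on which the punctured code has minimum distance `q`. -/
theorem stmt4 {F : Type*} [Field F] [Fintype F] [DecidableEq F] {m q : ℕ}
    (hq : Fintype.card F = q) (hm : 2 ≤ m) :
    ∀ g ∈ projPoints F m, ∃ W : Submodule F (Fin m → F),
      Module.finrank F ↥W = 2 ∧ g ∈ W ∧
      ((projPoints F m).filter fun v => v ∈ W).card = q + 1 ∧
      (∀ x : Fin m → F,
        (∃ d ∈ (projPoints F m).filter fun v => v ∈ W, x ⬝ᵥ d ≠ 0) →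
        q ≤ (((projPoints F m).filter fun v => v ∈ W).filter fun d => x ⬝ᵥ d ≠ 0).card) ∧
      (∃ x : Fin m → F,
        (((projPoints F m).filter fun v => v ∈ W).filter fun d => x ⬝ᵥ d ≠ 0).card = q ∧
        (∃ d ∈ (projPoints F m).filter fun v => v ∈ W, x ⬝ᵥ d ≠ 0)) := by
  intro g hg
  have hq2 : 2 ≤ q := hq ▸ Fintype.one_lt_card
  have hg0 : g ≠ 0 := projPoints_ne_zero hg
  -- find h outside span {g}
  have hrank : Module.finrank F (Fin m → F) = m := Module.finrank_fin_fun F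
  have hspan_ne : Submodule.span F {g} ≠ ⊤ := by
    intro htop
    have h1 : Module.finrank F ↥(Submodule.span F {g}) = 1 :=
      finrank_span_singleton hg0
    rw [htop, finrank_top, hrank] at h1
    omega
  obtain ⟨h, hh⟩ : ∃ h, h ∉ Submodule.span F {g} := by
    by_contra hcon
    push_neg at hcon
    exact hspan_ne (Submodule.eq_top_iff'.mpr hcon)
  have li : LinearIndependent F ![g, h] := by
    rw [LinearIndependent.pair_iff' hg0]
    intro a ha
    exact hh (ha ▸ Submodule.smul_mem _ a (Submodule.mem_span_singleton_self g))
  set W := Submodule.span F (Set.range ![g, h]) with hW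
  have hgW : g ∈ W := Submodule.subset_span ⟨0, rfl⟩
  have hhW : h ∈ W := Submodule.subset_span ⟨1, rfl⟩
  have hrkW : Module.finrank F ↥W = 2 := by
    rw [hW, finrank_span_eq_card li, Fintype.card_fin]
  have hcardW : Fintype.card ↥W = q ^ 2 := by
    rw [Module.card_eq_pow_finrank (K := F), hrkW, hq]
  -- the number of projective points on the line
  have hsq : q ^ 2 - 1 = (q + 1) * (q - 1) := by
    simpa using Nat.sq_sub_sq q 1
  have hTcard : ((projPoints F m).filter fun v => v ∈ W).card = q + 1 := by
    have hcount := projPoints_count (F := F) (m := m) W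
    rw [hq, hcardW, hsq] at hcount
    exact Nat.eq_of_mul_eq_mul_right (by omega) hcount
  -- the generic counting argument for K = W ⊓ ker φ
  have key : ∀ (φ : (Fin m → F) →ₗ[F] F), (∃ d ∈ W, φ d ≠ 0) →
      (((projPoints F m).filter fun v => v ∈ W).filter fun d => ¬ φ d ≠ 0).card * (q - 1)
        = q ^ (Module.finrank F ↥(W ⊓ LinearMap.ker φ : Submodule F (Fin m → F))) - 1 ∧
      Module.finrank F ↥(W ⊓ LinearMap.ker φ : Submodule F (Fin m → F)) < 2 := by
    intro φ ⟨d, hdW, hdφ⟩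
    set K : Submodule F (Fin m → F) := W ⊓ LinearMap.ker φ with hK
    have hfilter : (((projPoints F m).filter fun v => v ∈ W).filter fun v => ¬ φ v ≠ 0)
        = (projPoints F m).filter fun v => v ∈ K := by
      rw [Finset.filter_filter]
      apply Finset.filter_congr
      intro v _
      simp [hK, Submodule.mem_inf, LinearMap.mem_ker]
    have hKlt : K < W := lt_of_le_of_ne inf_le_left (by
      intro hKW
      have hdK : d ∈ K := by rw [hKW]; exact hdW
      exact hdφ ((Submodule.mem_inf.mp hdK).2))
    have hrkK : Module.finrank F ↥K < 2 := hrkW ▸ Submodule.finrank_lt_finrank_of_lt hKlt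
    have hcount := projPoints_count (F := F) (m := m) K
    rw [hq, Module.card_eq_pow_finrank (K := F), hq] at hcount
    rw [hfilter]
    exact ⟨hcount, hrkK⟩
  refine ⟨W, hrkW, hgW, hTcard, ?_, ?_⟩
  · -- lower bound for every x
    intro x ⟨d, hd, hxd⟩
    set φ : (Fin m → F) →ₗ[F] F :=
      { toFun := fun v => x ⬝ᵥ v
        map_add' := fun a b => dotProduct_add x a b
        map_smul' := fun c a => by simp } with hφ
    have hd' := Finset.mem_filter.mp hd
    obtain ⟨hcount, hrkK⟩ := key φ ⟨d, hd'.2, hxd⟩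
    have hN' : (((projPoints F m).filter fun v => v ∈ W).filter fun d => ¬ x ⬝ᵥ d ≠ 0).card ≤ 1 := by
      have hle : q ^ (Module.finrank F ↥(W ⊓ LinearMap.ker φ : Submodule F (Fin m → F))) - 1
          ≤ q - 1 := by
        have : q ^ (Module.finrank F ↥(W ⊓ LinearMap.ker φ : Submodule F (Fin m → F))) ≤ q ^ 1 :=
          Nat.pow_le_pow_right (by omega) (by omega)
        simpa using Nat.sub_le_sub_right this 1
      have := hcount.le.trans hle
      exact Nat.le_of_mul_le_mul_right (by simpa [hφ] using this) (by omega)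
    have hsplit := Finset.card_filter_add_card_filter_not
      (s := (projPoints F m).filter fun v => v ∈ W) (p := fun d => x ⬝ᵥ d ≠ 0)
    rw [hTcard] at hsplit
    omega
  · -- existence of x with exactly q nonzero coordinates
    set b : Module.Basis (Fin 2) F ↥W := Module.Basis.span li with hb
    obtain ⟨f, hf⟩ := LinearMap.exists_extend (b.coord 1)
    have hfg : f g = 0 := by
      have h1 : (⟨g, hgW⟩ : ↥W) = b 0 := Subtype.ext (by rw [hb, Module.Basis.span_apply]; rfl)
      have h2 := LinearMap.congr_fun hf (⟨g, hgW⟩ : ↥W)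
      simp only [LinearMap.comp_apply, Submodule.coe_subtype] at h2
      rw [h2, h1, Module.Basis.coord_apply, Module.Basis.repr_self, Finsupp.single_apply]
      simp
    have hfh : f h = 1 := by
      have h1 : (⟨h, hhW⟩ : ↥W) = b 1 := Subtype.ext (by rw [hb, Module.Basis.span_apply]; rfl)
      have h2 := LinearMap.congr_fun hf (⟨h, hhW⟩ : ↥W)
      simp only [LinearMap.comp_apply, Submodule.coe_subtype] at h2
      rw [h2, h1, Module.Basis.coord_apply, Module.Basis.repr_self, Finsupp.single_apply]
      simp
    set x : Fin m → F := fun i => f (Pi.basisFun F (Fin m) i) with hx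
    have hkey : ∀ v : Fin m → F, x ⬝ᵥ v = f v := by
      intro v
      conv_rhs => rw [← Module.Basis.sum_repr (Pi.basisFun F (Fin m)) v]
      rw [map_sum]
      simp only [_root_.map_smul, smul_eq_mul, Pi.basisFun_repr]
      simp [dotProduct, hx, mul_comm]
    -- the witness d
    have hh0 : h ≠ 0 := by
      intro h0; rw [h0] at hfh; simp at hfh
    obtain ⟨hnrm_mem, c, hc, hnrm_eq⟩ := nrm_spec hh0
    have hdT : nrm h ∈ (projPoints F m).filter fun v => v ∈ W :=
      Finset.mem_filter.mpr ⟨hnrm_mem, hnrm_eq ▸ W.smul_mem c hhW⟩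
    have hdx : x ⬝ᵥ nrm h ≠ 0 := by
      rw [hkey, hnrm_eq, _root_.map_smul, smul_eq_mul, hfh, mul_one]
      exact hc
    refine ⟨x, ?_, ⟨nrm h, hdT, hdx⟩⟩
    -- exact count
    set φ : (Fin m → F) →ₗ[F] F :=
      { toFun := fun v => x ⬝ᵥ v
        map_add' := fun a b => dotProduct_add x a b
        map_smul' := fun c a => by simp } with hφ
    obtain ⟨hcount, hrkK⟩ := key φ ⟨h, hhW, by simpa [hφ, hkey, hfh] using one_ne_zero⟩
    have hgK : g ∈ (W ⊓ LinearMap.ker φ : Submodule F (Fin m → F)) :=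
      Submodule.mem_inf.mpr ⟨hgW, LinearMap.mem_ker.mpr (by simp [hφ, hkey, hfg])⟩
    have hrkpos : 0 < Module.finrank F ↥(W ⊓ LinearMap.ker φ : Submodule F (Fin m → F)) := by
      rw [Module.finrank_pos_iff_exists_ne_zero]
      exact ⟨⟨g, hgK⟩, by simpa using hg0⟩
    have hrk1 : Module.finrank F ↥(W ⊓ LinearMap.ker φ : Submodule F (Fin m → F)) = 1 := by
      omega
    rw [hrk1, pow_one] at hcount
    have hN1 : (((projPoints F m).filter fun v => v ∈ W).filter fun d => ¬ x ⬝ᵥ d ≠ 0).card = 1 := by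
      have h2 : (((projPoints F m).filter fun v => v ∈ W).filter
          fun d => ¬ φ d ≠ 0).card * (q - 1) = 1 * (q - 1) := by rw [hcount]; ring
      have h3 := Nat.eq_of_mul_eq_mul_right (show 0 < q - 1 by omega) h2
      exact h3
    have hsplit := Finset.card_filter_add_card_filter_not
      (s := (projPoints F m).filter fun v => v ∈ W) (p := fun d => x ⬝ᵥ d ≠ 0)
    rw [hTcard] at hsplit
    omega
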